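/- Let y ∈ ℂ^{MN} be the pulsone with y[k0 + pM] = (1/√N) e^{2πi p l0/N} for p ∈ {0,...,N-1} and y[n] = 0 for n ≢ k0 (mod M). Then for any x ∈ ℂ^{MN} and any k, l, A_{x,y}[k,l] = e^{-2πi[l((k+k0) mod M - k) - ⌊(k+k0)/M⌋ l0 M]/(MN)} · (1/√N) Σ_{p=0}^{N-1} x[(k+k0) mod M + pM] e^{-2πi(l + l0)p/N}, i.e., the cross-ambiguity with a pulsone reduces to a length-N discrete Fourier transform of a subsampled sequence, up to an explicit unimodular phase. -/

import Mathlib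

open Complex BigOperators Finset

/-- The character `a ↦ e^{2πi a / Q}` on `ZMod Q` (well defined since it only
depends on the residue of the exponent modulo `Q`). -/
noncomputable def ch (Q : ℕ) (a : ZMod Q) : ℂ :=
  Complex.exp (2 * Real.pi * Complex.I * a.val / Q)

/-- The Heisenberg operator `D_{(k,l)}` acting on `Q`-periodic sequences:
`(D_{(k,l)} x)[n] = x[n-k] e^{2πi l (n-k)/Q}`. -/
noncomputable def HeisD (Q : ℕ) (k l : ZMod Q) (x : ZMod Q → ℂ) : ZMod Q → ℂ :=
  fun n => x (n - k) * ch Q (l * (n - k))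

/-- The (cross-)ambiguity function
`A_{x,y}[k,l] = Σ_n x[n] conj(y[n-k]) e^{-2πi l (n-k)/Q}`. -/
noncomputable def Amb (Q : ℕ) [NeZero Q] (x y : ZMod Q → ℂ) (k l : ZMod Q) : ℂ :=
  ∑ n : ZMod Q, x n * (starRingEnd ℂ) (y (n - k)) * (starRingEnd ℂ) (ch Q (l * (n - k)))

/-- The pulsone sequence: `y[k0 + pM] = (1/√N) e^{2πi p l0 / N}` for `0 ≤ p < N`,
and `y[n] = 0` when `n ≢ k0 (mod M)`. -/
noncomputable def pulsone (M N : ℕ) (k0 l0 : ℕ) : ZMod (M * N) → ℂ :=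
  fun n => if n.val % M = k0 then
      (1 / Real.sqrt N) *
        Complex.exp (2 * Real.pi * Complex.I * (n.val / M : ℕ) * l0 / N)
    else 0

/- ### Auxiliary lemmas -/

lemma expZ_congr (Q : ℕ) [NeZero Q] {a b : ℤ} (h : (Q:ℤ) ∣ b - a) :
    Complex.exp (2 * Real.pi * Complex.I * a / Q) = Complex.exp (2 * Real.pi * Complex.I * b / Q) := by
  obtain ⟨t, ht⟩ := h
  have hQ : (Q:ℂ) ≠ 0 := Nat.cast_ne_zero.mpr (NeZero.ne Q)
  have hb : (b:ℂ) = a + Q * t := by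
    have : (b:ℤ) = a + Q * t := by linarith
    exact_mod_cast congrArg (Int.cast : ℤ → ℂ) this
  rw [hb]
  have : 2 * Real.pi * Complex.I * ((a:ℂ) + Q * t) / Q
      = 2 * Real.pi * Complex.I * a / Q + t * (2 * Real.pi * Complex.I) := by
    field_simp
  rw [this, Complex.exp_add, Complex.exp_int_mul_two_pi_mul_I, mul_one]

lemma conj_exp (c : ℝ) (Q : ℕ) :
    (starRingEnd ℂ) (Complex.exp (2 * Real.pi * Complex.I * c / Q))
      = Complex.exp (2 * Real.pi * Complex.I * (-c) / Q) := by
  rw [← Complex.exp_conj]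
  congr 1
  simp [map_div₀, Complex.conj_I, map_ofNat]

lemma conj_ch (Q : ℕ) [NeZero Q] (n : ℕ) :
    (starRingEnd ℂ) (ch Q (n : ZMod Q))
      = Complex.exp (2 * Real.pi * Complex.I * ((-(n:ℤ) : ℤ) : ℂ) / Q) := by
  have hdvd : (Q:ℤ) ∣ (-(n:ℤ)) - (-(((n : ZMod Q)).val : ℤ)) := by
    have hv : (((((n : ZMod Q)).val : ℕ)) : ZMod Q) = (n : ZMod Q) := ZMod.natCast_rightInverse _
    have h0 : ((-(n:ℤ) - -(((n : ZMod Q)).val : ℤ) : ℤ) : ZMod Q) = 0 := by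
      push_cast
      rw [hv]
      ring
    exact (ZMod.intCast_zmod_eq_zero_iff_dvd _ _).mp h0
  have key := expZ_congr Q hdvd
  calc (starRingEnd ℂ) (ch Q (n : ZMod Q))
      = Complex.exp (2 * Real.pi * Complex.I * ((-(((n : ZMod Q)).val : ℤ) : ℤ) : ℂ) / Q) := by
        rw [ch]
        have h1 : ((((n : ZMod Q)).val : ℕ) : ℂ) = (((((n : ZMod Q)).val : ℕ) : ℝ) : ℂ) := by
          push_cast; ring
        rw [h1, conj_exp]
        congr 1
        push_cast
        ring
    _ = _ := key

lemma exp_div_lift (M N : ℕ) [NeZero M] [NeZero N] (z : ℤ) :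
    Complex.exp (2 * Real.pi * Complex.I * z / N)
      = Complex.exp (2 * Real.pi * Complex.I * ((z * M : ℤ) : ℂ) / ((M * N : ℕ) : ℂ)) := by
  congr 1
  have hM : (M:ℂ) ≠ 0 := Nat.cast_ne_zero.mpr (NeZero.ne M)
  have hN : (N:ℂ) ≠ 0 := Nat.cast_ne_zero.mpr (NeZero.ne N)
  push_cast
  field_simp

lemma exp_add_div (Q : ℕ) (a b : ℤ) :
    Complex.exp (2 * Real.pi * Complex.I * a / Q) * Complex.exp (2 * Real.pi * Complex.I * b / Q)
      = Complex.exp (2 * Real.pi * Complex.I * ((a + b : ℤ) : ℂ) / Q) := by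
  rw [← Complex.exp_add]
  congr 1
  push_cast
  ring

lemma sum_zmod_eq_sum_range (N : ℕ) [NeZero N] (f : ZMod N → ℂ) :
    ∑ t : ZMod N, f t = ∑ p ∈ Finset.range N, f (p : ZMod N) := by
  refine Finset.sum_nbij' (fun t => t.val) (fun p => (p : ZMod N)) ?_ ?_ ?_ ?_ ?_
  · intro a _; exact Finset.mem_range.mpr (ZMod.val_lt a)
  · intro p _; exact Finset.mem_univ _
  · intro a _; exact ZMod.natCast_rightInverse a
  · intro p hp; exact ZMod.val_natCast_of_lt (Finset.mem_range.mp hp)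
  · intro a _; rw [ZMod.natCast_rightInverse a]

/-- The common "middle form" of each term. -/
noncomputable def Fterm (M N : ℕ) (k0 l0 k l : ℕ) (x : ZMod (M * N) → ℂ) : ZMod N → ℂ :=
  fun t => (1 / (Real.sqrt N : ℂ)) * x (((k + k0 + M * t.val : ℕ)) : ZMod (M * N)) *
    Complex.exp (2 * Real.pi * Complex.I *
      ((-(t.val * l0 * M) - l * (k0 + t.val * M) : ℤ) : ℂ) / ((M * N : ℕ) : ℂ))

lemma conj_exp_int (Q : ℕ) (z : ℤ) :
    (starRingEnd ℂ) (Complex.exp (2 * Real.pi * Complex.I * (z : ℂ) / Q))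
      = Complex.exp (2 * Real.pi * Complex.I * ((-z : ℤ) : ℂ) / Q) := by
  rw [show ((z : ℤ) : ℂ) = (((z : ℝ)) : ℂ) by push_cast; ring, conj_exp]
  congr 1
  push_cast
  ring

lemma lhs_term (M N : ℕ) [NeZero M] [NeZero N] (k0 l0 k l q : ℕ) (hk0 : k0 < M) (hq : q < N)
    (x : ZMod (M * N) → ℂ) :
    x ((((k0 + q * M : ℕ)) : ZMod (M * N)) + (k : ZMod (M * N)))
      * (starRingEnd ℂ) (pulsone M N k0 l0 ((k0 + q * M : ℕ) : ZMod (M * N)))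
      * (starRingEnd ℂ) (ch (M * N) ((l : ZMod (M * N)) * ((k0 + q * M : ℕ) : ZMod (M * N))))
      = Fterm M N k0 l0 k l x (q : ZMod N) := by
  haveI : NeZero (M * N) := ⟨Nat.mul_ne_zero (NeZero.ne M) (NeZero.ne N)⟩
  have hMpos : 0 < M := Nat.pos_of_ne_zero (NeZero.ne M)
  have hlt : k0 + q * M < M * N := by
    calc k0 + q * M < M + q * M := by omega
      _ = (q + 1) * M := by ring
      _ ≤ N * M := Nat.mul_le_mul_right M hq
      _ = M * N := Nat.mul_comm N M
  have hval : (((k0 + q * M : ℕ)) : ZMod (M * N)).val = k0 + q * M :=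
    ZMod.val_natCast_of_lt hlt
  have hmod : (k0 + q * M) % M = k0 := by
    rw [Nat.add_mul_mod_self_right, Nat.mod_eq_of_lt hk0]
  have hdiv : (k0 + q * M) / M = q := by
    rw [Nat.add_mul_div_right _ _ hMpos, Nat.div_eq_of_lt hk0, Nat.zero_add]
  have hp : pulsone M N k0 l0 ((k0 + q * M : ℕ) : ZMod (M * N))
      = (1 / (Real.sqrt N : ℂ)) * Complex.exp (2 * Real.pi * Complex.I * (((q * l0 : ℤ)) : ℂ) / N) := by
    rw [pulsone]
    simp only [hval, hmod, if_pos, hdiv]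
    congr 1
    push_cast
    ring
  have hconj : (starRingEnd ℂ) (pulsone M N k0 l0 ((k0 + q * M : ℕ) : ZMod (M * N)))
      = (1 / (Real.sqrt N : ℂ)) *
          Complex.exp (2 * Real.pi * Complex.I * (((-(q * l0 : ℤ) * M : ℤ)) : ℂ) / ((M * N : ℕ) : ℂ)) := by
    rw [hp, map_mul, conj_exp_int]
    rw [← exp_div_lift M N (-(q * l0 : ℤ))]
    congr 1
    simp [map_div₀, Complex.conj_ofReal]
  have hch : (starRingEnd ℂ) (ch (M * N) ((l : ZMod (M * N)) * ((k0 + q * M : ℕ) : ZMod (M * N))))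
      = Complex.exp (2 * Real.pi * Complex.I * (((-(l * (k0 + q * M) : ℤ) : ℤ)) : ℂ) / ((M * N : ℕ) : ℂ)) := by
    rw [show ((l : ZMod (M * N)) * ((k0 + q * M : ℕ) : ZMod (M * N)))
        = (((l * (k0 + q * M) : ℕ)) : ZMod (M * N)) by push_cast; ring]
    rw [conj_ch]
    norm_cast
  have hidx : ((((k0 + q * M : ℕ)) : ZMod (M * N)) + (k : ZMod (M * N)))
      = (((k + k0 + M * q : ℕ)) : ZMod (M * N)) := by
    push_cast
    ring
  have hE : Complex.exp (2 * Real.pi * Complex.I * (((-(q * l0 : ℤ) * M : ℤ)) : ℂ) / ((M * N : ℕ) : ℂ))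
        * Complex.exp (2 * Real.pi * Complex.I * (((-(l * (k0 + q * M) : ℤ) : ℤ)) : ℂ) / ((M * N : ℕ) : ℂ))
      = Complex.exp (2 * Real.pi * Complex.I *
          ((-(q * l0 * M) - l * (k0 + q * M) : ℤ) : ℂ) / ((M * N : ℕ) : ℂ)) := by
    rw [exp_add_div]
    congr 2
    push_cast
    ring
  rw [hconj, hch, hidx]
  rw [show Fterm M N k0 l0 k l x (q : ZMod N)
      = (1 / (Real.sqrt N : ℂ)) * x (((k + k0 + M * q : ℕ)) : ZMod (M * N)) *
          Complex.exp (2 * Real.pi * Complex.I *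
            ((-(q * l0 * M) - l * (k0 + q * M) : ℤ) : ℂ) / ((M * N : ℕ) : ℂ)) by
    simp only [Fterm, ZMod.val_natCast_of_lt hq]]
  rw [← hE]
  ring

lemma rhs_term (M N : ℕ) [NeZero M] [NeZero N] (k0 l0 k l p : ℕ) (hp : p < N)
    (x : ZMod (M * N) → ℂ) :
    Complex.exp (-(2 * Real.pi * Complex.I) *
            (((l : ℤ) * ((((k + k0) % M : ℕ) : ℤ) - (k : ℤ))
              - (((k + k0) / M : ℕ) : ℤ) * (l0 : ℤ) * (M : ℤ) : ℤ)) / (M * N)) *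
      ((1 / Real.sqrt N) * (x ((((k + k0) % M + p * M : ℕ)) : ZMod (M * N)) *
          Complex.exp (-(2 * Real.pi * Complex.I) * (l + l0) * p / N)))
      = Fterm M N k0 l0 k l x ((p : ZMod N) - (((k + k0) / M : ℕ) : ZMod N)) := by
  haveI : NeZero (M * N) := ⟨Nat.mul_ne_zero (NeZero.ne M) (NeZero.ne N)⟩
  set r : ℕ := (k + k0) % M with hr_def
  set s : ℕ := (k + k0) / M with hs_def
  set v : ℕ := ((p : ZMod N) - (s : ZMod N)).val with hv_def
  have hvN : ((v : ℕ) : ZMod N) = (p : ZMod N) - (s : ZMod N) := ZMod.natCast_rightInverse _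
  obtain ⟨t, ht⟩ : ((N:ℤ)) ∣ ((v:ℤ) - ((p:ℤ) - (s:ℤ))) := by
    apply (ZMod.intCast_zmod_eq_zero_iff_dvd _ _).mp
    push_cast
    rw [hvN]
    ring
  have hd : (M:ℤ) * (s:ℤ) + (r:ℤ) = (k:ℤ) + (k0:ℤ) := by
    have h := Nat.div_add_mod (k + k0) M
    rw [← hs_def, ← hr_def] at h
    exact_mod_cast h
  have hidx : (((k + k0 + M * v : ℕ)) : ZMod (M * N)) = (((r + p * M : ℕ)) : ZMod (M * N)) := by
    have h1 : ((((k + k0 + M * v : ℕ) : ℤ)) : ZMod (M * N)) = (((r + p * M : ℕ) : ℤ) : ZMod (M * N)) := by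
      rw [ZMod.intCast_eq_intCast_iff, Int.modEq_iff_dvd]
      refine ⟨-t, ?_⟩
      push_cast
      linear_combination (-(M:ℤ)) * ht + hd
    exact_mod_cast h1
  have e1 : Complex.exp (-(2 * Real.pi * Complex.I) *
            (((l : ℤ) * ((r : ℤ) - (k : ℤ)) - (s : ℤ) * (l0 : ℤ) * (M : ℤ) : ℤ)) / (M * N))
      = Complex.exp (2 * Real.pi * Complex.I *
            (((-((l : ℤ) * ((r : ℤ) - (k : ℤ)) - (s : ℤ) * (l0 : ℤ) * (M : ℤ)) : ℤ)) : ℂ) / ((M * N : ℕ) : ℂ)) := by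
    congr 1
    push_cast
    ring
  have e2 : Complex.exp (-(2 * Real.pi * Complex.I) * ((l : ℂ) + (l0 : ℂ)) * (p : ℂ) / N)
      = Complex.exp (2 * Real.pi * Complex.I *
            (((-(((l:ℤ) + l0) * p) * M : ℤ)) : ℂ) / ((M * N : ℕ) : ℂ)) := by
    rw [← exp_div_lift M N (-(((l:ℤ) + l0) * p))]
    congr 1
    push_cast
    ring
  have hE : Complex.exp (2 * Real.pi * Complex.I *
            (((-((l : ℤ) * ((r : ℤ) - (k : ℤ)) - (s : ℤ) * (l0 : ℤ) * (M : ℤ)) : ℤ)) : ℂ) / ((M * N : ℕ) : ℂ))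
        * Complex.exp (2 * Real.pi * Complex.I *
            (((-(((l:ℤ) + l0) * p) * M : ℤ)) : ℂ) / ((M * N : ℕ) : ℂ))
      = Complex.exp (2 * Real.pi * Complex.I *
            ((-(v * l0 * M) - l * (k0 + v * M) : ℤ) : ℂ) / ((M * N : ℕ) : ℂ)) := by
    rw [exp_add_div]
    apply expZ_congr
    refine ⟨-(t * ((l0:ℤ) + l)), ?_⟩
    push_cast
    linear_combination (-(l0:ℤ) * M - l * M) * ht + (l:ℤ) * hd
  simp only [Fterm, ← hv_def]
  rw [hidx, ← hE, ← e1, ← e2]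
  push_cast
  ring

/-- The cross-ambiguity with a pulsone reduces to a length-`N` DFT of a subsampled
sequence, up to an explicit unimodular phase:
`A_{x,y}[k,l] = e^{-2πi[l((k+k0) mod M - k) - ⌊(k+k0)/M⌋ l0 M]/(MN)} ·
(1/√N) Σ_{p<N} x[(k+k0) mod M + pM] e^{-2πi (l+l0) p / N}`. -/
theorem pulsone_cross_ambiguity (M N : ℕ) [NeZero M] [NeZero N]
    (k0 l0 : ℕ) (hk0 : k0 < M) (hl0 : l0 < N)
    (x : ZMod (M * N) → ℂ) (k l : ℕ) (hk : k < M * N) :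
    Amb (M * N) x (pulsone M N k0 l0) (k : ZMod (M * N)) (l : ZMod (M * N))
      = Complex.exp (-(2 * Real.pi * Complex.I) *
            (((l : ℤ) * ((((k + k0) % M : ℕ) : ℤ) - (k : ℤ))
              - (((k + k0) / M : ℕ) : ℤ) * (l0 : ℤ) * (M : ℤ) : ℤ)) / (M * N)) *
          ((1 / Real.sqrt N) * ∑ p ∈ Finset.range N,
            x ((((k + k0) % M + p * M : ℕ)) : ZMod (M * N)) *
              Complex.exp (-(2 * Real.pi * Complex.I) * (l + l0) * p / N)) := by
  haveI : NeZero (M * N) := ⟨Nat.mul_ne_zero (NeZero.ne M) (NeZero.ne N)⟩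
  have hMpos : 0 < M := Nat.pos_of_ne_zero (NeZero.ne M)
  have hL : Amb (M * N) x (pulsone M N k0 l0) (k : ZMod (M * N)) (l : ZMod (M * N))
      = ∑ t : ZMod N, Fterm M N k0 l0 k l x t := by
    calc Amb (M * N) x (pulsone M N k0 l0) (k : ZMod (M * N)) (l : ZMod (M * N))
        = ∑ m : ZMod (M * N), x (m + (k : ZMod (M * N)))
            * (starRingEnd ℂ) (pulsone M N k0 l0 m)
            * (starRingEnd ℂ) (ch (M * N) ((l : ZMod (M * N)) * m)) := by
          rw [Amb]
          exact (Fintype.sum_equiv (Equiv.addRight (k : ZMod (M * N))) _ _ (fun m => by simp)).symm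
      _ = ∑ i ∈ Finset.range (M * N), x ((i : ZMod (M * N)) + (k : ZMod (M * N)))
            * (starRingEnd ℂ) (pulsone M N k0 l0 (i : ZMod (M * N)))
            * (starRingEnd ℂ) (ch (M * N) ((l : ZMod (M * N)) * (i : ZMod (M * N)))) :=
          sum_zmod_eq_sum_range (M * N) _
      _ = ∑ i ∈ (Finset.range (M * N)).filter (fun i => i % M = k0),
            x ((i : ZMod (M * N)) + (k : ZMod (M * N)))
            * (starRingEnd ℂ) (pulsone M N k0 l0 (i : ZMod (M * N)))
            * (starRingEnd ℂ) (ch (M * N) ((l : ZMod (M * N)) * (i : ZMod (M * N)))) := by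
          refine (Finset.sum_filter_of_ne ?_).symm
          intro i hi hne
          by_contra hmod
          apply hne
          have hval : ((i : ZMod (M * N))).val = i := ZMod.val_natCast_of_lt (Finset.mem_range.mp hi)
          have hz : pulsone M N k0 l0 (i : ZMod (M * N)) = 0 := by
            rw [pulsone]
            simp only [hval]
            exact if_neg hmod
          rw [hz]
          simp
      _ = ∑ q ∈ Finset.range N, Fterm M N k0 l0 k l x (q : ZMod N) := by
          refine Finset.sum_nbij' (fun i => i / M) (fun q => k0 + q * M) ?_ ?_ ?_ ?_ ?_
          · intro i hi
            simp only [Finset.mem_filter, Finset.mem_range] at hi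
            refine Finset.mem_range.mpr ((Nat.div_lt_iff_lt_mul hMpos).mpr ?_)
            rw [Nat.mul_comm]
            exact hi.1
          · intro q hq
            simp only [Finset.mem_filter, Finset.mem_range] at hq ⊢
            constructor
            · calc k0 + q * M < M + q * M := by omega
                _ = (q + 1) * M := by ring
                _ ≤ N * M := Nat.mul_le_mul_right M hq
                _ = M * N := Nat.mul_comm N M
            · rw [Nat.add_mul_mod_self_right, Nat.mod_eq_of_lt hk0]
          · intro i hi
            simp only [Finset.mem_filter, Finset.mem_range] at hi
            have := Nat.mod_add_div' i M
            rw [hi.2] at this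
            exact this
          · intro q hq
            show (k0 + q * M) / M = q
            rw [Nat.add_mul_div_right _ _ hMpos, Nat.div_eq_of_lt hk0, Nat.zero_add]
          · intro i hi
            beta_reduce
            simp only [Finset.mem_filter, Finset.mem_range] at hi
            have hq : i / M < N := by
              refine (Nat.div_lt_iff_lt_mul hMpos).mpr ?_
              rw [Nat.mul_comm]
              exact hi.1
            set q := i / M with hq_def
            have hi' : k0 + q * M = i := by
              have := Nat.mod_add_div' i M
              rw [hi.2] at this
              exact this
            rw [← hi']
            exact lhs_term M N k0 l0 k l q hk0 hq x
      _ = ∑ t : ZMod N, Fterm M N k0 l0 k l x t := (sum_zmod_eq_sum_range N _).symm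
  have hR : Complex.exp (-(2 * Real.pi * Complex.I) *
            (((l : ℤ) * ((((k + k0) % M : ℕ) : ℤ) - (k : ℤ))
              - (((k + k0) / M : ℕ) : ℤ) * (l0 : ℤ) * (M : ℤ) : ℤ)) / (M * N)) *
          ((1 / Real.sqrt N) * ∑ p ∈ Finset.range N,
            x ((((k + k0) % M + p * M : ℕ)) : ZMod (M * N)) *
              Complex.exp (-(2 * Real.pi * Complex.I) * (l + l0) * p / N))
      = ∑ t : ZMod N, Fterm M N k0 l0 k l x t := by
    rw [Finset.mul_sum, Finset.mul_sum]
    calc (∑ p ∈ Finset.range N, Complex.exp (-(2 * Real.pi * Complex.I) *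
            (((l : ℤ) * ((((k + k0) % M : ℕ) : ℤ) - (k : ℤ))
              - (((k + k0) / M : ℕ) : ℤ) * (l0 : ℤ) * (M : ℤ) : ℤ)) / (M * N)) *
          ((1 / Real.sqrt N) * (x ((((k + k0) % M + p * M : ℕ)) : ZMod (M * N)) *
              Complex.exp (-(2 * Real.pi * Complex.I) * (l + l0) * p / N))))
        = ∑ p ∈ Finset.range N, Fterm M N k0 l0 k l x ((p : ZMod N) - (((k + k0) / M : ℕ) : ZMod N)) :=
          Finset.sum_congr rfl (fun p hp => rhs_term M N k0 l0 k l p (Finset.mem_range.mp hp) x)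
      _ = ∑ t : ZMod N, Fterm M N k0 l0 k l x (t - (((k + k0) / M : ℕ) : ZMod N)) :=
          (sum_zmod_eq_sum_range N
            (fun t => Fterm M N k0 l0 k l x (t - (((k + k0) / M : ℕ) : ZMod N)))).symm
      _ = ∑ t : ZMod N, Fterm M N k0 l0 k l x t :=
          Fintype.sum_equiv (Equiv.subRight ((((k + k0) / M : ℕ)) : ZMod N)) _ _ (fun t => rfl)
  exact hL.trans hR.symm
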